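/- First concentration compactness principle (the paper's Lemma 2.2, Euclidean case): let 0 < p < ∞ and let {f_j} ⊂ L^p(ℝ^N) satisfy ∫_{ℝ^N} |f_j|^p du = 1 for all j, and set ρ_j = |f_j|^p du. Then there is a subsequence (still denoted {ρ_j}) such that exactly one of the following holds: (1) (vanishing) for every R > 0, lim_{j→∞} sup_{u ∈ ℝ^N} ∫_{B(u,R)} ρ_j = 0; (2) (compactness) there exist points {u_j} ⊂ ℝ^N such that for every sufficiently small ε > 0 there is R₀ > 0 with ∫_{B(u_j, R₀)} ρ_j > 1 − ε for all j; (3) (dichotomy) there exists k ∈ (0,1) such that for every sufficiently small ε > 0 there exist R₀ > 0 and points {u_j} ⊂ ℝ^N such that for every R ≥ R₀, limsup_{j→∞} ( |k − ∫_{B(u_j,R)} ρ_j| + |(1 − k) − ∫_{ℝ^N ∖ B(u_j,R)} ρ_j| ) ≤ ε. -/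

import Mathlib

/-!
Pass to a subsequence along which the concentration functions `Q_j(n) = sup_u ∫_{B(u,n)} ρ_j`
converge for every integer radius `n` (Tychonoff on `[0,1]^ℕ`), and let `k = sup_n lim_j Q_j(n)`.
If `k = 0` the mass vanishes. If `k = 1`, centres carrying more than half of the mass at a fixed
radius capture almost all of it at a larger radius, because two balls of total mass `> 1` must
meet; the finitely many early indices are handled by the tightness of each single `ρ_j`. If
`0 < k < 1`, centres almost attaining `Q_j(n₀)` with `lim_j Q_j(n₀)` close to `k` carry mass close
to `k` in every larger ball. The same ball-meeting argument shows that the three alternatives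
exclude each other.
-/

open MeasureTheory Filter ENNReal Metric

/-- Vanishing alternative: for every `R > 0`,
`sup_{u} ∫_{B(u,R)} |g_j|^p du → 0` as `j → ∞`. -/
def CCVanishing {N : ℕ} (p : ℝ) (g : ℕ → EuclideanSpace ℝ (Fin N) → ℝ) : Prop :=
  ∀ R > (0 : ℝ),
    Tendsto (fun j => ⨆ u : EuclideanSpace ℝ (Fin N),
      ∫ v in Metric.ball u R, |g j v| ^ p) atTop (nhds 0)

/-- Compactness alternative: there are points `{u_j}` such that for every sufficiently small
`ε > 0` there is `R₀ > 0` with `∫_{B(u_j, R₀)} |g_j|^p du > 1 − ε` for all `j`. -/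
def CCCompactness {N : ℕ} (p : ℝ) (g : ℕ → EuclideanSpace ℝ (Fin N) → ℝ) : Prop :=
  ∃ u : ℕ → EuclideanSpace ℝ (Fin N), ∃ ε₀ > (0 : ℝ), ∀ ε, 0 < ε → ε < ε₀ →
    ∃ R₀ > (0 : ℝ), ∀ j : ℕ, (1 : ℝ) - ε < ∫ v in Metric.ball (u j) R₀, |g j v| ^ p

/-- Dichotomy alternative: there is `k ∈ (0,1)` such that for every sufficiently small `ε > 0`
there are `R₀ > 0` and points `{u_j}` such that for every `R ≥ R₀`,
`limsup_j ( |k − ∫_{B(u_j,R)} |g_j|^p| + |(1−k) − ∫_{B(u_j,R)ᶜ} |g_j|^p| ) ≤ ε`. -/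
def CCDichotomy {N : ℕ} (p : ℝ) (g : ℕ → EuclideanSpace ℝ (Fin N) → ℝ) : Prop :=
  ∃ k : ℝ, 0 < k ∧ k < 1 ∧ ∃ ε₀ > (0 : ℝ), ∀ ε, 0 < ε → ε < ε₀ →
    ∃ R₀ > (0 : ℝ), ∃ u : ℕ → EuclideanSpace ℝ (Fin N), ∀ R ≥ R₀,
      Filter.limsup (fun j =>
          |k - ∫ v in Metric.ball (u j) R, |g j v| ^ p| +
          |(1 - k) - ∫ v in (Metric.ball (u j) R)ᶜ, |g j v| ^ p|) atTop ≤ ε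

open Set Topology

theorem Metric.ball_subset_ball_of_not_disjoint {X : Type*} [PseudoMetricSpace X] {x y : X}
    {r s : ℝ} (h : ¬Disjoint (ball x r) (ball y s)) : ball x r ⊆ ball y (s + 2 * r) :=
  ball_subset_ball' <| by linarith [not_le.1 (mt ball_disjoint_ball h)]

namespace ConcentrationCompactness

section Density

variable {X : Type*} [MeasurableSpace X] {μ : Measure X}

structure IsProbDensity (μ : Measure X) (ρ : X → ℝ) : Prop where
  nonneg : ∀ x, 0 ≤ ρ x
  integrable : Integrable ρ μ
  integral_eq_one : ∫ x, ρ x ∂μ = 1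

theorem isProbDensity_abs_rpow {p : ℝ} (hp : 0 < p) {f : X → ℝ}
    (hf : MemLp f (ENNReal.ofReal p) μ) (h : ∫ x, |f x| ^ p ∂μ = 1) :
    IsProbDensity μ (fun x => |f x| ^ p) where
  nonneg _ := Real.rpow_nonneg (abs_nonneg _) p
  integrable := by
    simpa [ENNReal.toReal_ofReal hp.le, Real.norm_eq_abs] using
      hf.integrable_norm_rpow (by simp [hp]) ENNReal.ofReal_ne_top
  integral_eq_one := h

namespace IsProbDensity

variable {ρ : X → ℝ} {s t : Set X}

theorem setIntegral_nonneg (hρ : IsProbDensity μ ρ) (s : Set X) : 0 ≤ ∫ x in s, ρ x ∂μ :=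
  integral_nonneg hρ.nonneg

theorem setIntegral_mono (hρ : IsProbDensity μ ρ) (hst : s ⊆ t) :
    ∫ x in s, ρ x ∂μ ≤ ∫ x in t, ρ x ∂μ :=
  setIntegral_mono_set hρ.integrable.integrableOn (.of_forall hρ.nonneg) (.of_forall hst)

theorem setIntegral_le_one (hρ : IsProbDensity μ ρ) (s : Set X) : ∫ x in s, ρ x ∂μ ≤ 1 := by
  simpa [hρ.integral_eq_one] using hρ.setIntegral_mono (subset_univ s)

theorem setIntegral_compl (hρ : IsProbDensity μ ρ) (hs : MeasurableSet s) :
    ∫ x in sᶜ, ρ x ∂μ = 1 - ∫ x in s, ρ x ∂μ := by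
  linarith [integral_add_compl hs hρ.integrable, hρ.integral_eq_one]

theorem not_disjoint_of_one_lt_add (hρ : IsProbDensity μ ρ) (ht : MeasurableSet t)
    (h : 1 < ∫ x in s, ρ x ∂μ + ∫ x in t, ρ x ∂μ) : ¬Disjoint s t := fun hst => by
  rw [← setIntegral_union hst ht hρ.integrable.integrableOn hρ.integrable.integrableOn] at h
  linarith [hρ.setIntegral_le_one (s ∪ t)]

end IsProbDensity

end Density

section MetricMeasure

variable {X : Type*} [PseudoMetricSpace X] [MeasurableSpace X] {μ : Measure X}
  {ρ : X → ℝ} {g : ℕ → X → ℝ} {L : ℕ → ℝ}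

noncomputable def concentration (μ : Measure X) (ρ : X → ℝ) (R : ℝ) : ℝ :=
  ⨆ u, ∫ v in ball u R, ρ v ∂μ

noncomputable def dichotomyDefect (μ : Measure X) (ρ : X → ℝ) (k : ℝ) (u : X) (R : ℝ) : ℝ :=
  |k - ∫ v in ball u R, ρ v ∂μ| + |(1 - k) - ∫ v in (ball u R)ᶜ, ρ v ∂μ|

/-- `CCVanishing p g` is `Vanishing volume (fun j v => |g j v| ^ p)` by definition, and likewise
for the other two alternatives. -/
def Vanishing (μ : Measure X) (g : ℕ → X → ℝ) : Prop :=
  ∀ R > (0 : ℝ), Tendsto (fun j => concentration μ (g j) R) atTop (𝓝 0)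

def Compactness (μ : Measure X) (g : ℕ → X → ℝ) : Prop :=
  ∃ u : ℕ → X, ∃ ε₀ > (0 : ℝ), ∀ ε, 0 < ε → ε < ε₀ →
    ∃ R₀ > (0 : ℝ), ∀ j, 1 - ε < ∫ v in ball (u j) R₀, g j v ∂μ

def Dichotomy (μ : Measure X) (g : ℕ → X → ℝ) : Prop :=
  ∃ k : ℝ, 0 < k ∧ k < 1 ∧ ∃ ε₀ > (0 : ℝ), ∀ ε, 0 < ε → ε < ε₀ →
    ∃ R₀ > (0 : ℝ), ∃ u : ℕ → X, ∀ R ≥ R₀,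
      limsup (fun j => dichotomyDefect μ (g j) k (u j) R) atTop ≤ ε

theorem IsProbDensity.setIntegral_ball_le_concentration (hρ : IsProbDensity μ ρ) {R R' : ℝ}
    (hR : R ≤ R') (u : X) : ∫ v in ball u R, ρ v ∂μ ≤ concentration μ ρ R' :=
  (hρ.setIntegral_mono (ball_subset_ball hR)).trans <|
    le_ciSup (f := fun u => ∫ v in ball u R', ρ v ∂μ)
      ⟨1, forall_mem_range.2 fun _ => hρ.setIntegral_le_one _⟩ u

theorem IsProbDensity.concentration_mem_Icc [Nonempty X] (hρ : IsProbDensity μ ρ) (R : ℝ) :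
    concentration μ ρ R ∈ Icc 0 1 :=
  ⟨(hρ.setIntegral_nonneg _).trans
      (hρ.setIntegral_ball_le_concentration le_rfl (Classical.arbitrary X)),
    ciSup_le fun _ => hρ.setIntegral_le_one _⟩

theorem exists_seq_eventually_lt_setIntegral_ball [Nonempty X] {R l c : ℝ}
    (hlim : Tendsto (fun j => concentration μ (g j) R) atTop (𝓝 l)) (hc : c < l) :
    ∃ u : ℕ → X, ∀ᶠ j in atTop, c < ∫ v in ball (u j) R, g j v ∂μ := by
  have : ∀ j, ∃ u, c < concentration μ (g j) R → c < ∫ v in ball u R, g j v ∂μ := fun j => by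
    by_cases h : c < concentration μ (g j) R
    · obtain ⟨u, hu⟩ := exists_lt_of_lt_ciSup h
      exact ⟨u, fun _ => hu⟩
    · exact ⟨Classical.arbitrary X, fun h' => absurd h' h⟩
  choose u hu using this
  exact ⟨u, (hlim.eventually_const_lt hc).mono hu⟩

theorem exists_subseq_tendsto_concentration [Nonempty X] (hg : ∀ j, IsProbDensity μ (g j)) :
    ∃ φ : ℕ → ℕ, StrictMono φ ∧ ∃ L : ℕ → ℝ, (∀ n, L n ∈ Icc 0 1) ∧
      ∀ n : ℕ, Tendsto (fun j => concentration μ (g (φ j)) n) atTop (𝓝 (L n)) := by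
  obtain ⟨L, hL, φ, hφ, hlim⟩ :=
    (isCompact_univ_pi fun _ : ℕ => isCompact_Icc (a := (0 : ℝ)) (b := 1)).tendsto_subseq
      (x := fun j (n : ℕ) => concentration μ (g j) n)
      fun j n _ => (hg j).concentration_mem_Icc n
  exact ⟨φ, hφ, L, fun n => hL n (mem_univ n), tendsto_pi_nhds.1 hlim⟩

theorem vanishing_of_isLUB_zero [Nonempty X] (hg : ∀ j, IsProbDensity μ (g j))
    (hL : ∀ n : ℕ, Tendsto (fun j => concentration μ (g j) n) atTop (𝓝 (L n)))
    (hk : IsLUB (range L) 0) : Vanishing μ g := by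
  intro R _
  have hL0 : L ⌈R⌉₊ = 0 := le_antisymm (hk.1 (mem_range_self _))
    (ge_of_tendsto' (hL _) fun j => ((hg j).concentration_mem_Icc _).1)
  refine squeeze_zero (fun j => ((hg j).concentration_mem_Icc R).1) (fun j => ?_) (hL0 ▸ hL _)
  exact ciSup_le fun u => (hg j).setIntegral_ball_le_concentration (Nat.le_ceil R) u

theorem Vanishing.not_compactness (hv : Vanishing μ g) (hg : ∀ j, IsProbDensity μ (g j)) :
    ¬Compactness μ g := by
  rintro ⟨u, ε₀, hε₀, hc⟩
  obtain ⟨R₀, hR₀, hmass⟩ :=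
    hc (min (ε₀ / 2) (1 / 2)) (by positivity) (by linarith [min_le_left (ε₀ / 2) (1 / 2)])
  obtain ⟨j, hj⟩ := ((hv R₀ hR₀).eventually_lt_const (by norm_num : (0 : ℝ) < 1 / 2)).exists
  linarith [hmass j, (hg j).setIntegral_ball_le_concentration (R := R₀) le_rfl (u j),
    min_le_right (ε₀ / 2) (1 / 2)]

variable [OpensMeasurableSpace X]

theorem IsProbDensity.eventually_lt_setIntegral_ball (hρ : IsProbDensity μ ρ) (u : X) {c : ℝ}
    (hc : c < 1) : ∀ᶠ R in atTop, c < ∫ v in ball u R, ρ v ∂μ := by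
  have hlim : Tendsto (fun n : ℕ => ∫ v in ball u n, ρ v ∂μ) atTop (𝓝 1) := by
    simpa [iUnion_ball_nat, hρ.integral_eq_one] using
      tendsto_setIntegral_of_monotone (fun _ => measurableSet_ball)
        (fun m n hmn => ball_subset_ball (Nat.cast_le.2 hmn)) hρ.integrable.integrableOn
  obtain ⟨n, hn⟩ := (hlim.eventually_const_lt hc).exists
  exact eventually_atTop.2 ⟨n, fun R hR => hn.trans_le (hρ.setIntegral_mono (ball_subset_ball hR))⟩

theorem exists_radius_forall_lt_setIntegral_ball (hg : ∀ j, IsProbDensity μ (g j))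
    {u : ℕ → X} {c R₁ : ℝ} (hc : c < 1)
    (h : ∀ᶠ j in atTop, c < ∫ v in ball (u j) R₁, g j v ∂μ) :
    ∃ R > 0, ∀ j, c < ∫ v in ball (u j) R, g j v ∂μ := by
  obtain ⟨J, hJ⟩ := eventually_atTop.1 h
  have hfin : ∀ᶠ R in atTop, ∀ j ∈ Finset.range J, c < ∫ v in ball (u j) R, g j v ∂μ :=
    (eventually_all_finset _).2 fun j _ => (hg j).eventually_lt_setIntegral_ball (u j) hc
  obtain ⟨R, hRfin, hR⟩ := (hfin.and (eventually_ge_atTop (max R₁ 1))).exists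
  refine ⟨R, one_pos.trans_le (le_of_max_le_right hR), fun j => ?_⟩
  rcases lt_or_ge j J with hj | hj
  · exact hRfin j (Finset.mem_range.2 hj)
  · exact (hJ j hj).trans_le <|
      (hg j).setIntegral_mono (ball_subset_ball (le_of_max_le_left hR))

theorem IsProbDensity.dichotomyDefect_eq (hρ : IsProbDensity μ ρ) (k : ℝ) (u : X) (R : ℝ) :
    dichotomyDefect μ ρ k u R = 2 * |k - ∫ v in ball u R, ρ v ∂μ| := by
  rw [dichotomyDefect, hρ.setIntegral_compl measurableSet_ball,
    show ∀ a : ℝ, 1 - k - (1 - a) = -(k - a) from fun a => by ring, abs_neg, two_mul]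

theorem eventually_abs_sub_lt_of_limsup_dichotomyDefect_le (hg : ∀ j, IsProbDensity μ (g j))
    {k ε R : ℝ} {u : ℕ → X} (hε : 0 < ε)
    (h : limsup (fun j => dichotomyDefect μ (g j) k (u j) R) atTop ≤ ε) :
    ∀ᶠ j in atTop, |k - ∫ v in ball (u j) R, g j v ∂μ| < ε := by
  simp only [fun j => (hg j).dichotomyDefect_eq k (u j) R] at h
  have hbdd : IsBoundedUnder (· ≤ ·) atTop fun j => 2 * |k - ∫ v in ball (u j) R, g j v ∂μ| :=
    isBoundedUnder_of ⟨2 * (|k| + 1), fun j => by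
      have h₀ := (hg j).setIntegral_nonneg (ball (u j) R)
      have h₁ := (hg j).setIntegral_le_one (ball (u j) R)
      have := (abs_sub k _).trans (add_le_add_right ((abs_of_nonneg h₀).trans_le h₁) |k|)
      linarith⟩
  filter_upwards [eventually_lt_of_limsup_lt (h.trans_lt (by linarith : ε < 2 * ε)) hbdd]
    with j hj
  linarith

theorem limsup_dichotomyDefect_le (hg : ∀ j, IsProbDensity μ (g j)) {k ε R : ℝ} {u : ℕ → X}
    (h : ∀ᶠ j in atTop, |k - ∫ v in ball (u j) R, g j v ∂μ| ≤ ε / 2) :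
    limsup (fun j => dichotomyDefect μ (g j) k (u j) R) atTop ≤ ε := by
  refine limsup_le_of_le (isCoboundedUnder_le_of_le atTop (x := 0) fun j => ?_) ?_
  · exact add_nonneg (abs_nonneg _) (abs_nonneg _)
  · filter_upwards [h] with j hj
    rw [(hg j).dichotomyDefect_eq]
    linarith

theorem compactness_of_isLUB_one [Nonempty X] (hg : ∀ j, IsProbDensity μ (g j))
    (hL : ∀ n : ℕ, Tendsto (fun j => concentration μ (g j) n) atTop (𝓝 (L n)))
    (hk : IsLUB (range L) 1) : Compactness μ g := by
  obtain ⟨_, ⟨n₁, rfl⟩, hn₁, -⟩ := hk.exists_between (by norm_num : (1 / 2 : ℝ) < 1)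
  obtain ⟨u, hu⟩ := exists_seq_eventually_lt_setIntegral_ball (hL n₁) hn₁
  refine ⟨u, 1 / 2, by norm_num, fun ε hε hε₀ => ?_⟩
  obtain ⟨_, ⟨n₂, rfl⟩, hn₂, -⟩ := hk.exists_between (by linarith : 1 - ε < 1)
  obtain ⟨v, hv⟩ := exists_seq_eventually_lt_setIntegral_ball (hL n₂) hn₂
  refine exists_radius_forall_lt_setIntegral_ball hg (R₁ := n₁ + 2 * n₂) (by linarith) ?_
  filter_upwards [hu, hv] with j hu hv
  have hmeet := (hg j).not_disjoint_of_one_lt_add measurableSet_ball (by linarith : 1 <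
    ∫ x in ball (v j) n₂, g j x ∂μ + ∫ x in ball (u j) n₁, g j x ∂μ)
  exact hv.trans_le ((hg j).setIntegral_mono (ball_subset_ball_of_not_disjoint hmeet))

theorem dichotomy_of_isLUB [Nonempty X] (hg : ∀ j, IsProbDensity μ (g j))
    (hL : ∀ n : ℕ, Tendsto (fun j => concentration μ (g j) n) atTop (𝓝 (L n))) {k : ℝ}
    (hk : IsLUB (range L) k) (hk0 : 0 < k) (hk1 : k < 1) : Dichotomy μ g := by
  refine ⟨k, hk0, hk1, 1, one_pos, fun ε hε _ => ?_⟩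
  obtain ⟨_, ⟨n₀, rfl⟩, hn₀, -⟩ := hk.exists_between (by linarith : k - ε / 2 < k)
  obtain ⟨u, hu⟩ := exists_seq_eventually_lt_setIntegral_ball (hL n₀) hn₀
  refine ⟨n₀ + 1, by positivity, u, fun R hR => limsup_dichotomyDefect_le hg ?_⟩
  have hup : ∀ᶠ j in atTop, concentration μ (g j) ⌈R⌉₊ < k + ε / 2 :=
    (hL _).eventually_lt_const (by linarith [hk.1 (mem_range_self ⌈R⌉₊)])
  filter_upwards [hu, hup] with j hlow hhigh
  have h₁ := (hg j).setIntegral_mono (ball_subset_ball (by linarith : (n₀ : ℝ) ≤ R))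
    (s := ball (u j) n₀)
  have h₂ := (hg j).setIntegral_ball_le_concentration (Nat.le_ceil R) (u j)
  exact abs_le.2 ⟨by linarith, by linarith⟩

theorem exists_subseq_vanishing_or_compactness_or_dichotomy [Nonempty X]
    (hg : ∀ j, IsProbDensity μ (g j)) :
    ∃ φ : ℕ → ℕ, StrictMono φ ∧ (Vanishing μ (fun j => g (φ j)) ∨
      Compactness μ (fun j => g (φ j)) ∨ Dichotomy μ (fun j => g (φ j))) := by
  obtain ⟨φ, hφ, L, hL01, hL⟩ := exists_subseq_tendsto_concentration hg
  have hk := isLUB_ciSup (f := L) ⟨1, forall_mem_range.2 fun n => (hL01 n).2⟩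
  have hg' : ∀ j, IsProbDensity μ (g (φ j)) := fun j => hg (φ j)
  refine ⟨φ, hφ, ?_⟩
  rcases ((hL01 0).1.trans (hk.1 (mem_range_self 0))).eq_or_lt with h0 | h0
  · exact .inl (vanishing_of_isLUB_zero hg' hL (h0 ▸ hk))
  rcases (hk.2 (forall_mem_range.2 fun n => (hL01 n).2)).eq_or_lt with h1 | h1
  · exact .inr (.inl (compactness_of_isLUB_one hg' hL (h1 ▸ hk)))
  · exact .inr (.inr (dichotomy_of_isLUB hg' hL hk h0 h1))

theorem Vanishing.not_dichotomy (hv : Vanishing μ g) (hg : ∀ j, IsProbDensity μ (g j)) :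
    ¬Dichotomy μ g := by
  rintro ⟨k, hk0, -, ε₀, hε₀, hd⟩
  obtain ⟨R₀, hR₀, u, hR⟩ :=
    hd (min (ε₀ / 2) (k / 2)) (by positivity) (by linarith [min_le_left (ε₀ / 2) (k / 2)])
  have hnear := eventually_abs_sub_lt_of_limsup_dichotomyDefect_le hg (by positivity)
    (hR R₀ le_rfl)
  obtain ⟨j, hj, hj'⟩ := (hnear.and ((hv R₀ hR₀).eventually_lt_const (half_pos hk0))).exists
  linarith [abs_lt.1 hj, (hg j).setIntegral_ball_le_concentration (R := R₀) le_rfl (u j),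
    min_le_right (ε₀ / 2) (k / 2)]

/-- A ball of mass close to `1` around `u j` meets the ball of mass close to `k` around `u' j`,
so it lies in a larger ball around `u' j`, whose mass is also close to `k`. -/
theorem Compactness.not_dichotomy (hc : Compactness μ g) (hg : ∀ j, IsProbDensity μ (g j)) :
    ¬Dichotomy μ g := by
  rintro ⟨k, hk0, hk1, ε₀', hε₀', hd⟩
  obtain ⟨u, ε₀, hε₀, hc⟩ := hc
  obtain ⟨ε, hε, hεε₀, hεε₀', hεk⟩ :
      ∃ ε, 0 < ε ∧ ε < ε₀ ∧ ε < ε₀' ∧ 2 * ε ≤ min k (1 - k) := by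
    have hm : 0 < min (min ε₀ ε₀') (min k (1 - k)) :=
      lt_min (lt_min hε₀ hε₀') (lt_min hk0 (sub_pos.2 hk1))
    refine ⟨_, half_pos hm, ?_, ?_, ?_⟩ <;>
      linarith [min_le_left (min ε₀ ε₀') (min k (1 - k)), min_le_left ε₀ ε₀',
        min_le_right (min ε₀ ε₀') (min k (1 - k)), min_le_right ε₀ ε₀']
  obtain ⟨R₀, hR₀, hmass⟩ := hc ε hε hεε₀
  obtain ⟨R₁, hR₁, u', hR⟩ := hd ε hε hεε₀'
  have hnear := eventually_abs_sub_lt_of_limsup_dichotomyDefect_le hg hε (hR R₁ le_rfl)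
  have hfar := eventually_abs_sub_lt_of_limsup_dichotomyDefect_le hg hε
    (hR (R₁ + 2 * R₀) (by linarith))
  obtain ⟨j, hj, hj'⟩ := (hnear.and hfar).exists
  have hmeet := (hg j).not_disjoint_of_one_lt_add measurableSet_ball
    (s := ball (u j) R₀) (t := ball (u' j) R₁)
    (by linarith [hmass j, abs_lt.1 hj, min_le_left k (1 - k)])
  linarith [hmass j, abs_lt.1 hj', min_le_right k (1 - k),
    (hg j).setIntegral_mono (ball_subset_ball_of_not_disjoint hmeet)]

theorem exists_subseq_trichotomy [Nonempty X] (hg : ∀ j, IsProbDensity μ (g j)) :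
    ∃ φ : ℕ → ℕ, StrictMono φ ∧
      ((Vanishing μ (fun j => g (φ j)) ∧ ¬Compactness μ (fun j => g (φ j)) ∧
          ¬Dichotomy μ (fun j => g (φ j))) ∨
       (¬Vanishing μ (fun j => g (φ j)) ∧ Compactness μ (fun j => g (φ j)) ∧
          ¬Dichotomy μ (fun j => g (φ j))) ∨
       (¬Vanishing μ (fun j => g (φ j)) ∧ ¬Compactness μ (fun j => g (φ j)) ∧
          Dichotomy μ (fun j => g (φ j)))) := by
  obtain ⟨φ, hφ, h⟩ := exists_subseq_vanishing_or_compactness_or_dichotomy hg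
  have hg' : ∀ j, IsProbDensity μ (g (φ j)) := fun j => hg (φ j)
  refine ⟨φ, hφ, ?_⟩
  rcases h with hv | hc | hd
  · exact .inl ⟨hv, hv.not_compactness hg', hv.not_dichotomy hg'⟩
  · exact .inr (.inl ⟨fun hv => hv.not_compactness hg' hc, hc, hc.not_dichotomy hg'⟩)
  · exact .inr (.inr ⟨fun hv => hv.not_dichotomy hg' hd, fun hc => hc.not_dichotomy hg' hd, hd⟩)

end MetricMeasure

end ConcentrationCompactness

/-- **First concentration compactness principle** (the paper's Lemma 2.2, Euclidean case).
Let `0 < p < ∞` and `{f_j} ⊂ L^p(ℝ^N)` with `∫ |f_j|^p = 1` for all `j`. Then some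
subsequence satisfies exactly one of: vanishing, compactness, dichotomy. -/
theorem first_concentration_compactness (N : ℕ) (p : ℝ) (hp : 0 < p)
    (f : ℕ → EuclideanSpace ℝ (Fin N) → ℝ)
    (hmem : ∀ j, MemLp (f j) (ENNReal.ofReal p) volume)
    (hnorm : ∀ j, ∫ u, |f j u| ^ p = 1) :
    ∃ φ : ℕ → ℕ, StrictMono φ ∧
      ((CCVanishing p (fun j => f (φ j)) ∧ ¬ CCCompactness p (fun j => f (φ j)) ∧
          ¬ CCDichotomy p (fun j => f (φ j))) ∨
       (¬ CCVanishing p (fun j => f (φ j)) ∧ CCCompactness p (fun j => f (φ j)) ∧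
          ¬ CCDichotomy p (fun j => f (φ j))) ∨
       (¬ CCVanishing p (fun j => f (φ j)) ∧ ¬ CCCompactness p (fun j => f (φ j)) ∧
          CCDichotomy p (fun j => f (φ j)))) :=
  ConcentrationCompactness.exists_subseq_trichotomy fun j =>
    ConcentrationCompactness.isProbDensity_abs_rpow hp (hmem j) (hnorm j)
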